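/- arXiv:1412.1128 — 2 statements merged into one kernel-verified Lean document; each statement's English description precedes it below -/
import Mathlib

section
/- Let M ∈ ℝ, c ∈ ℝ with c ≠ 0, and let H be the map H(x,y) = (x̄, ȳ) with x̄ = M + c·x − y², ȳ = (y + x̄² − M)/c. Then H has a fixed point (u,v) with u ≠ v at which the Jacobian matrix of H has eigenvalue −1 if and only if c < 0 and 4M = (1 − 3c)(3 − c). (This is the curve PD(asym): M = (1−3c)(3−c)/4 of period doubling of the symmetric couple of fixed points, which exists only for c < 0.) -/
/-!
Off the diagonal, the fixed-point equations `v² = M − (1−c)u`, `u² = M − (1−c)v` say exactly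
that `u + v = 1 − c` and `uv = (1−c)² − M`. The Jacobian has determinant `1`, so `−1` is an
eigenvalue iff the trace is `−2`, which at a fixed point reads `4uv = (c+1)²`. Eliminating `uv`
gives `4M = (1−3c)(3−c)`, and real `u ≠ v` with the prescribed sum and product exist iff
`(c+1)² < (1−c)²`, i.e. `c < 0`.
-/

/-- The map `H(x,y) = (x̄, ȳ)` with `x̄ = M + c·x − y²` and `ȳ = (y + x̄² − M)/c`,
the explicit form of the implicit system `x̄ = M + c·x − y²`, `c·ȳ = −M + y + x̄²`. -/
noncomputable def Hmap (M c : ℝ) (p : ℝ × ℝ) : ℝ × ℝ :=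
  (M + c * p.1 - p.2 ^ 2,
    (p.2 + (M + c * p.1 - p.2 ^ 2) ^ 2 - M) / c)

/-- The Jacobian matrix (2×2 real derivative matrix) of `Hmap M c` at the point
`(x,y)`, where `x̄ = M + c·x − y²`:
`[[c, −2y], [2x̄, (1 − 4x̄y)/c]]`. -/
noncomputable def HJac (M c : ℝ) (p : ℝ × ℝ) : Matrix (Fin 2) (Fin 2) ℝ :=
  !![c, -2 * p.2;
     2 * (M + c * p.1 - p.2 ^ 2), (1 - 4 * (M + c * p.1 - p.2 ^ 2) * p.2) / c]

/-- `μ ∈ ℂ` is an eigenvalue of the real 2×2 matrix `A`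
(eigenvalues of real matrices are taken over `ℂ`). -/
def hasEigenvalue (A : Matrix (Fin 2) (Fin 2) ℝ) (μ : ℂ) : Prop :=
  (A.map (fun t : ℝ => (t : ℂ)) - μ • 1).det = 0

theorem hasEigenvalue_ofReal_iff (A : Matrix (Fin 2) (Fin 2) ℝ) (μ : ℝ) :
    hasEigenvalue A μ ↔ μ ^ 2 - A.trace * μ + A.det = 0 := by
  have hchar : (A.map (fun t : ℝ => (t : ℂ)) - (μ : ℂ) • 1).det
      = ((μ ^ 2 - A.trace * μ + A.det : ℝ) : ℂ) := by
    simp only [Matrix.det_fin_two, Matrix.trace_fin_two, Matrix.sub_apply, Matrix.map_apply,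
      Matrix.smul_apply, Matrix.one_apply_eq, Matrix.one_apply_ne zero_ne_one,
      Matrix.one_apply_ne one_ne_zero, smul_eq_mul, Complex.ofReal_add, Complex.ofReal_sub,
      Complex.ofReal_pow, Complex.ofReal_mul]
    ring
  rw [hasEigenvalue, hchar, Complex.ofReal_eq_zero]

theorem det_HJac {c : ℝ} (hc : c ≠ 0) (M : ℝ) (p : ℝ × ℝ) : (HJac M c p).det = 1 := by
  rw [HJac, Matrix.det_fin_two_of]
  field_simp
  ring

theorem hasEigenvalue_HJac_neg_one_iff {c : ℝ} (hc : c ≠ 0) (M : ℝ) (p : ℝ × ℝ) :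
    hasEigenvalue (HJac M c p) (-1) ↔ (c + 1) ^ 2 = 4 * (M + c * p.1 - p.2 ^ 2) * p.2 := by
  have hchar := hasEigenvalue_ofReal_iff (HJac M c p) (-1)
  push_cast at hchar
  rw [hchar, det_HJac hc, HJac, Matrix.trace_fin_two_of]
  constructor <;> intro h
  · field_simp at h; linear_combination h
  · field_simp; linear_combination h

theorem Hmap_eq_self_iff {c : ℝ} (hc : c ≠ 0) (M u v : ℝ) :
    Hmap M c (u, v) = (u, v) ↔ v ^ 2 = M - (1 - c) * u ∧ u ^ 2 = M - (1 - c) * v := by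
  rw [Hmap, Prod.mk.injEq, div_eq_iff hc]
  constructor
  · rintro ⟨h1, h2⟩
    rw [h1] at h2
    constructor <;> linarith
  · rintro ⟨h1, h2⟩
    have hx : M + c * u - v ^ 2 = u := by linarith
    rw [hx]
    constructor <;> linarith

theorem sq_eq_sq_symm_iff_of_ne {a b u v : ℝ} (huv : u ≠ v) :
    (v ^ 2 = a - b * u ∧ u ^ 2 = a - b * v) ↔ u + v = b ∧ u * v = b ^ 2 - a := by
  constructor
  · rintro ⟨h1, h2⟩
    have hsum : u + v = b := by
      have : (u - v) * (u + v - b) = 0 := by linear_combination h2 - h1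
      rcases mul_eq_zero.mp this with h | h
      · exact absurd (sub_eq_zero.mp h) huv
      · linarith
    refine ⟨hsum, ?_⟩
    have hv : v = b - u := by linarith
    subst hv
    linear_combination -h2
  · rintro ⟨hsum, hprod⟩
    have hv : v = b - u := by linarith
    subst hv
    constructor <;> linear_combination -hprod

theorem exists_ne_add_eq_four_mul_eq_iff (s q : ℝ) :
    (∃ u v : ℝ, u ≠ v ∧ u + v = s ∧ 4 * (u * v) = q) ↔ q < s ^ 2 := by
  constructor
  · rintro ⟨u, v, huv, rfl, rfl⟩
    have : 0 < (u - v) ^ 2 := by positivity [sub_ne_zero.mpr huv]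
    linarith
  · intro hq
    set d := Real.sqrt (s ^ 2 - q)
    have hd : d ^ 2 = s ^ 2 - q := Real.sq_sqrt (by linarith)
    have hdpos : 0 < d := Real.sqrt_pos.mpr (by linarith)
    refine ⟨(s + d) / 2, (s - d) / 2, by intro h; linarith, by ring, by linear_combination -hd⟩

theorem Hmap_eq_self_and_hasEigenvalue_neg_one_iff {c : ℝ} (hc : c ≠ 0) {M u v : ℝ}
    (huv : u ≠ v) :
    Hmap M c (u, v) = (u, v) ∧ hasEigenvalue (HJac M c (u, v)) (-1) ↔
      u + v = 1 - c ∧ 4 * (u * v) = (c + 1) ^ 2 ∧ 4 * M = (1 - 3 * c) * (3 - c) := by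
  rw [hasEigenvalue_HJac_neg_one_iff hc,
    and_congr_right fun h => by rw [show M + c * u - v ^ 2 = u from congrArg Prod.fst h],
    Hmap_eq_self_iff hc, sq_eq_sq_symm_iff_of_ne huv]
  constructor
  · rintro ⟨⟨hsum, hprod⟩, heig⟩
    exact ⟨hsum, by linear_combination -heig, by linear_combination 4 * hprod + heig⟩
  · rintro ⟨hsum, hprod, hM⟩
    exact ⟨⟨hsum, by linear_combination (hprod + hM) / 4⟩, by linear_combination -hprod⟩

/-- `H` has an off-diagonal fixed point at which the Jacobian matrix
has eigenvalue `−1` iff `c < 0` and `4M = (1−3c)(3−c)` (the curve `PD(asym)` of period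
doubling of the symmetric couple of fixed points, existing only for `c < 0`). -/
theorem stmt_15 (M c : ℝ) (hc : c ≠ 0) :
    (∃ u v : ℝ, u ≠ v ∧ Hmap M c (u, v) = (u, v) ∧
        hasEigenvalue (HJac M c (u, v)) (-1)) ↔
      (c < 0 ∧ 4 * M = (1 - 3 * c) * (3 - c)) := by
  calc (∃ u v : ℝ, u ≠ v ∧ Hmap M c (u, v) = (u, v) ∧ hasEigenvalue (HJac M c (u, v)) (-1))
      ↔ (∃ u v : ℝ, u ≠ v ∧ u + v = 1 - c ∧ 4 * (u * v) = (c + 1) ^ 2) ∧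
          4 * M = (1 - 3 * c) * (3 - c) := by
        simp only [← exists_and_right, and_assoc]
        exact exists_congr fun u => exists_congr fun v =>
          and_congr_right (Hmap_eq_self_and_hasEigenvalue_neg_one_iff hc)
    _ ↔ c < 0 ∧ 4 * M = (1 - 3 * c) * (3 - c) := by
        rw [exists_ne_add_eq_four_mul_eq_iff]
        exact and_congr_left' ⟨fun h => by nlinarith, fun h => by nlinarith⟩
end

section
/- Let M ∈ ℝ, c ∈ ℝ with c ≠ 0, and assume −(c − 1)² < 4M < min(4 − (c − 1)², (c + 1)(3c − 1)). Let H be the map H(x,y) = (x̄, ȳ) with x̄ = M + c·x − y², ȳ = (y + x̄² − M)/c. Then H has a fixed point (x₀, x₀) on the diagonal at which the Jacobian matrix of H has two non-real complex eigenvalues of modulus 1; i.e. for parameters between the fold curve F₀ and the period-doubling curves PD₁, PD₂, the map H has a symmetric elliptic fixed point. -/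
def IsElliptic (A : Matrix (Fin 2) (Fin 2) ℝ) : Prop :=
  (∃ μ : ℂ, μ.im ≠ 0 ∧ ‖μ‖ = 1 ∧ hasEigenvalue A μ) ∧
    ∀ μ : ℂ, hasEigenvalue A μ → μ.im ≠ 0 ∧ ‖μ‖ = 1

theorem hasEigenvalue_iff (A : Matrix (Fin 2) (Fin 2) ℝ) (μ : ℂ) :
    hasEigenvalue A μ ↔ μ ^ 2 - A.trace * μ + A.det = 0 := by
  rw [hasEigenvalue, Matrix.det_fin_two, Matrix.trace_fin_two, Matrix.det_fin_two]
  simp only [Matrix.sub_apply, Matrix.map_apply, Matrix.smul_apply, Matrix.one_apply_eq,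
    Matrix.one_apply_ne zero_ne_one, Matrix.one_apply_ne one_ne_zero, smul_eq_mul, mul_one,
    mul_zero, sub_zero]
  push_cast
  constructor <;> intro h <;> linear_combination h

theorem im_ne_zero_and_norm_eq_one_of_sq_sub_mul_add_one_eq_zero {T : ℝ} (hT : T ^ 2 < 4)
    {μ : ℂ} (hμ : μ ^ 2 - T * μ + 1 = 0) : μ.im ≠ 0 ∧ ‖μ‖ = 1 := by
  have hre := congrArg Complex.re hμ
  have him := congrArg Complex.im hμ
  simp only [pow_two, Complex.add_re, Complex.sub_re, Complex.mul_re, Complex.ofReal_re,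
    Complex.ofReal_im, Complex.one_re, Complex.zero_re, Complex.add_im, Complex.sub_im,
    Complex.mul_im, Complex.one_im, Complex.zero_im, zero_mul, sub_zero, add_zero] at hre him
  have him_ne : μ.im ≠ 0 := by
    intro h0
    nlinarith [sq_nonneg (2 * μ.re - T)]
  have hre_eq : 2 * μ.re = T := by
    have : μ.im * (2 * μ.re - T) = 0 := by linear_combination him
    linarith [(mul_eq_zero.mp this).resolve_left him_ne]
  refine ⟨him_ne, ?_⟩
  have hsq : ‖μ‖ ^ 2 = 1 := by
    rw [Complex.sq_norm, Complex.normSq_apply]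
    linear_combination μ.re * hre_eq - hre
  exact (pow_eq_one_iff_of_nonneg (norm_nonneg μ) two_ne_zero).mp hsq

theorem exists_sq_sub_mul_add_one_eq_zero {T : ℝ} (hT : T ^ 2 < 4) :
    ∃ μ : ℂ, μ ^ 2 - T * μ + 1 = 0 := by
  obtain ⟨r, hr⟩ : ∃ r : ℝ, r ^ 2 = 1 - T ^ 2 / 4 := ⟨_, Real.sq_sqrt (by linarith)⟩
  refine ⟨⟨T / 2, r⟩, Complex.ext ?_ ?_⟩
  · simp only [pow_two, Complex.add_re, Complex.sub_re, Complex.mul_re, Complex.ofReal_re,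
      Complex.ofReal_im, Complex.one_re, Complex.zero_re]
    linear_combination -hr
  · simp only [pow_two, Complex.add_im, Complex.sub_im, Complex.mul_im, Complex.ofReal_re,
      Complex.ofReal_im, Complex.one_im, Complex.zero_im]
    ring

theorem isElliptic_of_det_eq_one {A : Matrix (Fin 2) (Fin 2) ℝ} (hdet : A.det = 1)
    (htr : A.trace ^ 2 < 4) : IsElliptic A := by
  have hchar (μ : ℂ) : hasEigenvalue A μ ↔ μ ^ 2 - A.trace * μ + 1 = 0 := by
    rw [hasEigenvalue_iff, hdet, Complex.ofReal_one]
  obtain ⟨μ, hμ⟩ := exists_sq_sub_mul_add_one_eq_zero htr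
  refine ⟨⟨μ, ?_⟩, fun ν hν => ?_⟩
  · obtain ⟨him, hnorm⟩ := im_ne_zero_and_norm_eq_one_of_sq_sub_mul_add_one_eq_zero htr hμ
    exact ⟨him, hnorm, (hchar μ).mpr hμ⟩
  · exact im_ne_zero_and_norm_eq_one_of_sq_sub_mul_add_one_eq_zero htr ((hchar ν).mp hν)

section Henon

variable {M c : ℝ}

theorem Hmap_diag_eq_iff (hc : c ≠ 0) (x : ℝ) :
    Hmap M c (x, x) = (x, x) ↔ x ^ 2 = (c - 1) * x + M := by
  simp only [Hmap, Prod.ext_iff]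
  constructor
  · rintro ⟨h, -⟩
    linear_combination -h
  · intro h
    have hfix : M + c * x - x ^ 2 = x := by linear_combination -h
    refine ⟨hfix, ?_⟩
    rw [hfix, div_eq_iff hc]
    linear_combination h

theorem HJac_det (hc : c ≠ 0) (p : ℝ × ℝ) : (HJac M c p).det = 1 := by
  rw [HJac, Matrix.det_fin_two_of]
  field_simp
  ring

theorem HJac_trace_diag {x : ℝ} (hx : x ^ 2 = (c - 1) * x + M) :
    (HJac M c (x, x)).trace = c + (1 - 4 * x ^ 2) / c := by
  have hfix : M + c * x - x ^ 2 = x := by linear_combination -hx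
  rw [HJac, Matrix.trace_fin_two_of, hfix]
  ring

theorem sq_add_div_lt_four (hc : c ≠ 0) {y : ℝ}
    (hy : ((c - 1) ^ 2 - y) * ((c + 1) ^ 2 - y) < 0) : (c + (1 - y) / c) ^ 2 < 4 := by
  have hc2 : 0 < c ^ 2 := by positivity
  have hfactor : (c + (1 - y) / c) ^ 2 - 4 = ((c - 1) ^ 2 - y) * ((c + 1) ^ 2 - y) / c ^ 2 := by
    field_simp
    ring
  rw [← sub_neg, hfactor]
  exact div_neg_of_neg_of_pos hy hc2

/-- The roots are `2x = c - 1 ± s` with `s = √((c - 1)² + 4M)`; the hypotheses say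
`0 < s < 2` and `s < 2|c|`. The root `c - 1 + s` works for `c < 0` and `c ≥ 1`,
the root `c - 1 - s` for `0 < c < 1`. -/
theorem exists_diag_root_sq_between (h1 : -(c - 1) ^ 2 < 4 * M)
    (h2 : 4 * M < min (4 - (c - 1) ^ 2) ((c + 1) * (3 * c - 1))) :
    ∃ x : ℝ, x ^ 2 = (c - 1) * x + M ∧
      ((c - 1) ^ 2 - 4 * x ^ 2) * ((c + 1) ^ 2 - 4 * x ^ 2) < 0 := by
  obtain ⟨h2a, h2b⟩ := lt_min_iff.mp h2
  set s := Real.sqrt ((c - 1) ^ 2 + 4 * M)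
  have hs2 : s ^ 2 = (c - 1) ^ 2 + 4 * M := Real.sq_sqrt (by linarith)
  have hs0 : 0 < s := Real.sqrt_pos.mpr (by linarith)
  have hs_lt_two : s < 2 := by nlinarith
  have hs_lt : s ^ 2 < (2 * c) ^ 2 := by nlinarith
  have hplus : ((c - 1) ^ 2 - 4 * ((c - 1 + s) / 2) ^ 2) *
      ((c + 1) ^ 2 - 4 * ((c - 1 + s) / 2) ^ 2) =
        s * (2 - 2 * c - s) * ((2 - s) * (s + 2 * c)) := by ring
  have hminus : ((c - 1) ^ 2 - 4 * ((c - 1 - s) / 2) ^ 2) *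
      ((c + 1) ^ 2 - 4 * ((c - 1 - s) / 2) ^ 2) =
        s * (2 * c - 2 - s) * ((2 + s) * (2 * c - s)) := by ring
  rcases lt_or_ge c 0 with hc0 | hc0
  · have hsc : s + 2 * c < 0 := by nlinarith
    refine ⟨(c - 1 + s) / 2, by linear_combination hs2 / 4, ?_⟩
    rw [hplus]
    exact mul_neg_of_pos_of_neg (mul_pos hs0 (by linarith))
      (mul_neg_of_pos_of_neg (by linarith) hsc)
  rcases lt_or_ge c 1 with hc1 | hc1
  · have hsc : s < 2 * c := by nlinarith
    refine ⟨(c - 1 - s) / 2, by linear_combination hs2 / 4, ?_⟩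
    rw [hminus]
    exact mul_neg_of_neg_of_pos (mul_neg_of_pos_of_neg hs0 (by linarith))
      (mul_pos (by linarith) (by linarith))
  · refine ⟨(c - 1 + s) / 2, by linear_combination hs2 / 4, ?_⟩
    rw [hplus]
    exact mul_neg_of_neg_of_pos (mul_neg_of_pos_of_neg hs0 (by linarith))
      (mul_pos (by linarith) (by linarith))

end Henon

theorem stmt_17_general (M c : ℝ)
    (h1 : -(c - 1) ^ 2 < 4 * M)
    (h2 : 4 * M < min (4 - (c - 1) ^ 2) ((c + 1) * (3 * c - 1))) :
    ∃ x₀ : ℝ, Hmap M c (x₀, x₀) = (x₀, x₀) ∧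
      (∃ μ : ℂ, μ.im ≠ 0 ∧ ‖μ‖ = 1 ∧
        hasEigenvalue (HJac M c (x₀, x₀)) μ) ∧
      (∀ μ : ℂ, hasEigenvalue (HJac M c (x₀, x₀)) μ →
        μ.im ≠ 0 ∧ ‖μ‖ = 1) := by
  have hc : c ≠ 0 := by
    rintro rfl
    norm_num at h1 h2
    linarith
  obtain ⟨x, hx, hbetween⟩ := exists_diag_root_sq_between h1 h2
  have htr : (HJac M c (x, x)).trace ^ 2 < 4 := by
    rw [HJac_trace_diag hx]
    exact sq_add_div_lt_four hc hbetween
  exact ⟨x, (Hmap_diag_eq_iff hc x).mpr hx, isElliptic_of_det_eq_one (HJac_det hc _) htr⟩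

/-- for `−(c−1)² < 4M < min(4 − (c−1)², (c+1)(3c−1))` (between the fold
curve `F₀` and the period-doubling curves `PD₁`, `PD₂`), the map `H` has a diagonal fixed
point `(x₀, x₀)` at which the Jacobian matrix has two non-real complex eigenvalues of
modulus `1`: a symmetric elliptic fixed point. -/
theorem stmt_17 (M c : ℝ) (hc : c ≠ 0)
    (h1 : -(c - 1) ^ 2 < 4 * M)
    (h2 : 4 * M < min (4 - (c - 1) ^ 2) ((c + 1) * (3 * c - 1))) :
    ∃ x₀ : ℝ, Hmap M c (x₀, x₀) = (x₀, x₀) ∧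
      (∃ μ : ℂ, μ.im ≠ 0 ∧ ‖μ‖ = 1 ∧
        hasEigenvalue (HJac M c (x₀, x₀)) μ) ∧
      (∀ μ : ℂ, hasEigenvalue (HJac M c (x₀, x₀)) μ →
        μ.im ≠ 0 ∧ ‖μ‖ = 1) :=
  stmt_17_general M c h1 h2
end
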